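/- arXiv:2102.04282 — 7 statements merged into one kernel-verified Lean document; each statement's English description precedes it below -/
import Mathlib

section
/- Let ε ∈ (0,1), k ≥ 1, P ⊂ ℝ^d finite nonempty, π1 : ℝ^d → ℝ^{d'} a map, and X, X* ⊂ ℝ^d with |X| = |X*| = k. Suppose: (i) (1/(1+ε)²)·cost(P,X) ≤ cost(π1(P),π1(X)) ≤ (1+ε)²·cost(P,X), and the same two-sided bounds hold with X* in place of X; (ii) a triple (S',Δ,w), with S' ⊂ ℝ^{d'} finite nonempty, w : S' → ℝ, Δ ∈ ℝ, satisfies (1−ε)·cost(π1(P),Y) ≤ cost((S',Δ,w),Y) ≤ (1+ε)·cost(π1(P),Y) for every finite nonempty Y ⊂ ℝ^{d'} with |Y| ≤ k; (iii) X' := π1(X) satisfies cost((S',Δ,w),X') ≤ cost((S',Δ,w),Y) for every finite nonempty Y ⊂ ℝ^{d'} with |Y| ≤ k. Then cost(P,X) ≤ ((1+ε)^5/(1−ε))·cost(P,X*). (Approximation-error part of Theorem 6 on the DR+CR algorithm, conditioned on the JL and coreset events.) -/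
open scoped BigOperators

abbrev Pt (d : ℕ) : Type := EuclideanSpace ℝ (Fin d)

/-- Per-point k-means cost: `min_{y ∈ Y} ‖p - y‖²`. -/
noncomputable def ptCost {F : Type*} [NormedAddCommGroup F] (p : F) (Y : Set F) : ℝ :=
  sInf ((fun y => ‖p - y‖ ^ 2) '' Y)

/-- Projected k-means cost: `∑_{p ∈ P} min_{y ∈ Y} ‖π(p) - y‖²` (sum indexed by points of `P`). -/
noncomputable def projCost {E F : Type*} [NormedAddCommGroup F]
    (π : E → F) (P : Finset E) (Y : Set F) : ℝ :=
  ∑ p ∈ P, ptCost (π p) Y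

/-- k-means cost: `∑_{p ∈ P} min_{x ∈ X} ‖p - x‖²`. -/
noncomputable def kmeansCost {F : Type*} [NormedAddCommGroup F]
    (P : Finset F) (X : Set F) : ℝ :=
  ∑ p ∈ P, ptCost p X

/-- Coreset cost (possibly after applying a map `π` to the coreset points):
`∑_{q ∈ S} w(q) · min_{y ∈ Y} ‖π(q) - y‖² + Δ`. -/
noncomputable def coresetCost {E F : Type*} [NormedAddCommGroup F]
    (S : Finset E) (Δ : ℝ) (w : E → ℝ) (π : E → F) (Y : Set F) : ℝ :=
  (∑ q ∈ S, w q * ptCost (π q) Y) + Δ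

/-!
Chain the five comparisons: the distortion bound for `X`, the coreset lower bound at `π1(X)`,
the optimality of `π1(X)` for the coreset cost against `π1(X*)`, the coreset upper bound at
`π1(X*)`, and the distortion bound for `X*`. The factors multiply to `(1+ε)^5 / (1-ε)`.
-/

theorem le_pow_five_div_mul_of_distortion {ε a a' b b' : ℝ} (hε0 : -1 < ε) (hε1 : ε < 1)
    (ha : 1 / (1 + ε) ^ 2 * a ≤ a') (hab : (1 - ε) * a' ≤ (1 + ε) * b')
    (hb : b' ≤ (1 + ε) ^ 2 * b) :
    a ≤ (1 + ε) ^ 5 / (1 - ε) * b := by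
  have hpos : 0 < 1 + ε := by linarith
  have hneg : 0 < 1 - ε := by linarith
  rw [one_div, inv_mul_le_iff₀ (by positivity)] at ha
  rw [div_mul_eq_mul_div, le_div_iff₀ hneg]
  calc a * (1 - ε) ≤ (1 + ε) ^ 2 * a' * (1 - ε) := mul_le_mul_of_nonneg_right ha hneg.le
    _ = (1 + ε) ^ 2 * ((1 - ε) * a') := by ring
    _ ≤ (1 + ε) ^ 2 * ((1 + ε) * b') := by gcongr
    _ = (1 + ε) ^ 3 * b' := by ring
    _ ≤ (1 + ε) ^ 3 * ((1 + ε) ^ 2 * b) := by gcongr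
    _ = (1 + ε) ^ 5 * b := by ring

theorem projCost_mul_le_of_coresetCost_le {E F : Type*} [NormedAddCommGroup F] {π : E → F}
    {P : Finset E} {S : Finset F} {w : F → ℝ} {Δ ε : ℝ} {k : ℕ}
    (hcore : ∀ Y : Finset F, Y.Nonempty → Y.card ≤ k →
      (1 - ε) * projCost π P (Y : Set F) ≤ coresetCost S Δ w id (Y : Set F) ∧
      coresetCost S Δ w id (Y : Set F) ≤ (1 + ε) * projCost π P (Y : Set F))
    {A B : Finset F} (hA : A.Nonempty) (hAk : A.card ≤ k) (hB : B.Nonempty) (hBk : B.card ≤ k)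
    (hopt : coresetCost S Δ w id (A : Set F) ≤ coresetCost S Δ w id (B : Set F)) :
    (1 - ε) * projCost π P (A : Set F) ≤ (1 + ε) * projCost π P (B : Set F) :=
  (hcore A hA hAk).1.trans (hopt.trans (hcore B hB hBk).2)

theorem stmt3_general {d d' k : ℕ} (hk : 1 ≤ k) {ε : ℝ} (hε0 : 0 < ε) (hε1 : ε < 1)
    (P : Finset (Pt d))
    (π1 : Pt d → Pt d')
    (X Xstar : Finset (Pt d)) (hX : X.card = k) (hXstar : Xstar.card = k)
    (hJLX : (1 / (1 + ε) ^ 2) * kmeansCost P (X : Set (Pt d)) ≤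
        projCost π1 P (π1 '' (X : Set (Pt d))) ∧
      projCost π1 P (π1 '' (X : Set (Pt d))) ≤
        (1 + ε) ^ 2 * kmeansCost P (X : Set (Pt d)))
    (hJLXstar : (1 / (1 + ε) ^ 2) * kmeansCost P (Xstar : Set (Pt d)) ≤
        projCost π1 P (π1 '' (Xstar : Set (Pt d))) ∧
      projCost π1 P (π1 '' (Xstar : Set (Pt d))) ≤
        (1 + ε) ^ 2 * kmeansCost P (Xstar : Set (Pt d)))
    (S' : Finset (Pt d')) (w : Pt d' → ℝ) (Δ : ℝ)
    (hcore : ∀ Y : Finset (Pt d'), Y.Nonempty → Y.card ≤ k →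
      (1 - ε) * projCost π1 P (Y : Set (Pt d')) ≤ coresetCost S' Δ w id (Y : Set (Pt d')) ∧
      coresetCost S' Δ w id (Y : Set (Pt d')) ≤ (1 + ε) * projCost π1 P (Y : Set (Pt d')))
    (hopt : ∀ Y : Finset (Pt d'), Y.Nonempty → Y.card ≤ k →
      coresetCost S' Δ w id (π1 '' (X : Set (Pt d))) ≤
        coresetCost S' Δ w id (Y : Set (Pt d'))) :
    kmeansCost P (X : Set (Pt d)) ≤
      ((1 + ε) ^ 5 / (1 - ε)) * kmeansCost P (Xstar : Set (Pt d)) := by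
  have hXne : X.Nonempty := Finset.card_pos.mp (by omega)
  have hXstarne : Xstar.Nonempty := Finset.card_pos.mp (by omega)
  have hXstark : (Xstar.image π1).card ≤ k := hXstar ▸ Finset.card_image_le
  have hproj := projCost_mul_le_of_coresetCost_le hcore (hXne.image π1)
    (hX ▸ Finset.card_image_le) (hXstarne.image π1) hXstark
    (by rw [Finset.coe_image]; exact hopt _ (hXstarne.image π1) hXstark)
  rw [Finset.coe_image, Finset.coe_image] at hproj
  exact le_pow_five_div_mul_of_distortion (by linarith) hε1 hJLX.1 hproj hJLXstar.2

theorem stmt3 {d d' k : ℕ} (hk : 1 ≤ k) {ε : ℝ} (hε0 : 0 < ε) (hε1 : ε < 1)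
    (P : Finset (Pt d)) (hP : P.Nonempty)
    (π1 : Pt d → Pt d')
    (X Xstar : Finset (Pt d)) (hX : X.card = k) (hXstar : Xstar.card = k)
    (hJLX : (1 / (1 + ε) ^ 2) * kmeansCost P (X : Set (Pt d)) ≤
        projCost π1 P (π1 '' (X : Set (Pt d))) ∧
      projCost π1 P (π1 '' (X : Set (Pt d))) ≤
        (1 + ε) ^ 2 * kmeansCost P (X : Set (Pt d)))
    (hJLXstar : (1 / (1 + ε) ^ 2) * kmeansCost P (Xstar : Set (Pt d)) ≤
        projCost π1 P (π1 '' (Xstar : Set (Pt d))) ∧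
      projCost π1 P (π1 '' (Xstar : Set (Pt d))) ≤
        (1 + ε) ^ 2 * kmeansCost P (Xstar : Set (Pt d)))
    (S' : Finset (Pt d')) (hS' : S'.Nonempty) (w : Pt d' → ℝ) (Δ : ℝ)
    (hcore : ∀ Y : Finset (Pt d'), Y.Nonempty → Y.card ≤ k →
      (1 - ε) * projCost π1 P (Y : Set (Pt d')) ≤ coresetCost S' Δ w id (Y : Set (Pt d')) ∧
      coresetCost S' Δ w id (Y : Set (Pt d')) ≤ (1 + ε) * projCost π1 P (Y : Set (Pt d')))
    (hopt : ∀ Y : Finset (Pt d'), Y.Nonempty → Y.card ≤ k →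
      coresetCost S' Δ w id (π1 '' (X : Set (Pt d))) ≤
        coresetCost S' Δ w id (Y : Set (Pt d'))) :
    kmeansCost P (X : Set (Pt d)) ≤
      ((1 + ε) ^ 5 / (1 - ε)) * kmeansCost P (Xstar : Set (Pt d)) :=
  stmt3_general hk hε0 hε1 P π1 X Xstar hX hXstar hJLX hJLXstar S' w Δ hcore hopt
end

section
/- Let ε ∈ (0,1), k ≥ 1, P ⊂ ℝ^d finite nonempty, and X, X* ⊂ ℝ^d with |X| = |X*| = k. Suppose: (i) a triple (S,Δ,w), with S ⊂ ℝ^d finite nonempty, w : S → ℝ, Δ ∈ ℝ, satisfies (1−ε)·cost(P,Y) ≤ cost((S,Δ,w),Y) ≤ (1+ε)·cost(P,Y) for every Y ⊂ ℝ^d with |Y| = k; (ii) a map π1 : ℝ^d → ℝ^{d'} satisfies (1/(1+ε)²)·cost((S,Δ,w),X) ≤ cost((π1(S),Δ,w),π1(X)) ≤ (1+ε)²·cost((S,Δ,w),X), and the same two-sided bounds hold with X* in place of X; (iii) X' := π1(X) satisfies cost((π1(S),Δ,w),X') ≤ cost((π1(S),Δ,w),Y) for every finite nonempty Y ⊂ ℝ^{d'}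 with |Y| ≤ k. Then cost(P,X) ≤ ((1+ε)^5/(1−ε))·cost(P,X*). (Approximation-error part of Theorem 8 on the CR+DR algorithm, conditioned on the coreset and JL events.) -/
open scoped BigOperators

lemma le_coresetCost_image_of_forall_card_le {E F : Type*} [NormedAddCommGroup F]
    {S : Finset E} {Δ : ℝ} {w : E → ℝ} {π : E → F} {k : ℕ} {c : ℝ}
    (hopt : ∀ Y : Finset F, Y.Nonempty → Y.card ≤ k → c ≤ coresetCost S Δ w π (Y : Set F))
    {Z : Finset E} (hZ : Z.Nonempty) (hZk : Z.card ≤ k) :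
    c ≤ coresetCost S Δ w π (π '' (Z : Set E)) := by
  classical
  simpa only [Finset.coe_image] using
    hopt (Z.image π) (hZ.image π) (Finset.card_image_le.trans hZk)

theorem stmt4_general {d d' k : ℕ} (hk : 1 ≤ k) {ε : ℝ} (hε0 : 0 < ε) (hε1 : ε < 1)
    (P : Finset (Pt d))
    (X Xstar : Finset (Pt d)) (hX : X.card = k) (hXstar : Xstar.card = k)
    (S : Finset (Pt d)) (w : Pt d → ℝ) (Δ : ℝ)
    (hcore : ∀ Y : Finset (Pt d), Y.card = k →
      (1 - ε) * kmeansCost P (Y : Set (Pt d)) ≤ coresetCost S Δ w id (Y : Set (Pt d)) ∧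
      coresetCost S Δ w id (Y : Set (Pt d)) ≤ (1 + ε) * kmeansCost P (Y : Set (Pt d)))
    (π1 : Pt d → Pt d')
    (hJLX : (1 / (1 + ε) ^ 2) * coresetCost S Δ w id (X : Set (Pt d)) ≤
        coresetCost S Δ w π1 (π1 '' (X : Set (Pt d))) ∧
      coresetCost S Δ w π1 (π1 '' (X : Set (Pt d))) ≤
        (1 + ε) ^ 2 * coresetCost S Δ w id (X : Set (Pt d)))
    (hJLXstar : (1 / (1 + ε) ^ 2) * coresetCost S Δ w id (Xstar : Set (Pt d)) ≤
        coresetCost S Δ w π1 (π1 '' (Xstar : Set (Pt d))) ∧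
      coresetCost S Δ w π1 (π1 '' (Xstar : Set (Pt d))) ≤
        (1 + ε) ^ 2 * coresetCost S Δ w id (Xstar : Set (Pt d)))
    (hopt : ∀ Y : Finset (Pt d'), Y.Nonempty → Y.card ≤ k →
      coresetCost S Δ w π1 (π1 '' (X : Set (Pt d))) ≤
        coresetCost S Δ w π1 (Y : Set (Pt d'))) :
    kmeansCost P (X : Set (Pt d)) ≤
      ((1 + ε) ^ 5 / (1 - ε)) * kmeansCost P (Xstar : Set (Pt d)) := by
  have hXstar_ne : Xstar.Nonempty := Finset.card_pos.mp (by omega)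
  have chain : (1 - ε) * kmeansCost P (X : Set (Pt d)) ≤
      (1 + ε) ^ 5 * kmeansCost P (Xstar : Set (Pt d)) := calc
    _ ≤ coresetCost S Δ w id (X : Set (Pt d)) := (hcore X hX).1
    _ ≤ (1 + ε) ^ 2 * coresetCost S Δ w π1 (π1 '' (X : Set (Pt d))) := by
      rw [← div_le_iff₀' (by positivity), ← one_div_mul_eq_div]
      exact hJLX.1
    _ ≤ (1 + ε) ^ 2 * coresetCost S Δ w π1 (π1 '' (Xstar : Set (Pt d))) := by
      gcongr
      exact le_coresetCost_image_of_forall_card_le hopt hXstar_ne hXstar.le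
    _ ≤ (1 + ε) ^ 2 * ((1 + ε) ^ 2 * coresetCost S Δ w id (Xstar : Set (Pt d))) := by
      gcongr
      exact hJLXstar.2
    _ ≤ (1 + ε) ^ 2 * ((1 + ε) ^ 2 * ((1 + ε) * kmeansCost P (Xstar : Set (Pt d)))) := by
      gcongr
      exact (hcore Xstar hXstar).2
    _ = (1 + ε) ^ 5 * kmeansCost P (Xstar : Set (Pt d)) := by ring
  rwa [div_mul_eq_mul_div, le_div_iff₀' (by linarith)]

theorem stmt4 {d d' k : ℕ} (hk : 1 ≤ k) {ε : ℝ} (hε0 : 0 < ε) (hε1 : ε < 1)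
    (P : Finset (Pt d)) (hP : P.Nonempty)
    (X Xstar : Finset (Pt d)) (hX : X.card = k) (hXstar : Xstar.card = k)
    (S : Finset (Pt d)) (hS : S.Nonempty) (w : Pt d → ℝ) (Δ : ℝ)
    (hcore : ∀ Y : Finset (Pt d), Y.card = k →
      (1 - ε) * kmeansCost P (Y : Set (Pt d)) ≤ coresetCost S Δ w id (Y : Set (Pt d)) ∧
      coresetCost S Δ w id (Y : Set (Pt d)) ≤ (1 + ε) * kmeansCost P (Y : Set (Pt d)))
    (π1 : Pt d → Pt d')
    (hJLX : (1 / (1 + ε) ^ 2) * coresetCost S Δ w id (X : Set (Pt d)) ≤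
        coresetCost S Δ w π1 (π1 '' (X : Set (Pt d))) ∧
      coresetCost S Δ w π1 (π1 '' (X : Set (Pt d))) ≤
        (1 + ε) ^ 2 * coresetCost S Δ w id (X : Set (Pt d)))
    (hJLXstar : (1 / (1 + ε) ^ 2) * coresetCost S Δ w id (Xstar : Set (Pt d)) ≤
        coresetCost S Δ w π1 (π1 '' (Xstar : Set (Pt d))) ∧
      coresetCost S Δ w π1 (π1 '' (Xstar : Set (Pt d))) ≤
        (1 + ε) ^ 2 * coresetCost S Δ w id (Xstar : Set (Pt d)))
    (hopt : ∀ Y : Finset (Pt d'), Y.Nonempty → Y.card ≤ k →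
      coresetCost S Δ w π1 (π1 '' (X : Set (Pt d))) ≤
        coresetCost S Δ w π1 (Y : Set (Pt d'))) :
    kmeansCost P (X : Set (Pt d)) ≤
      ((1 + ε) ^ 5 / (1 - ε)) * kmeansCost P (Xstar : Set (Pt d)) :=
  stmt4_general hk hε0 hε1 P X Xstar hX hXstar S w Δ hcore π1 hJLX hJLXstar hopt
end

section
/- Let ε ∈ (0,1), k ≥ 1, P ⊂ ℝ^d finite nonempty, and X, X* ⊂ ℝ^d with |X| = |X*| = k. Let π1 : ℝ^d → ℝ^{d1} and π3 : ℝ^{d1} → ℝ^{d2} be maps and let (S,Δ,w) be a triple with S ⊂ ℝ^{d1} finite nonempty, w : S → ℝ, Δ ∈ ℝ. Suppose: (i) (1/(1+ε)²)·cost(P,X) ≤ cost(π1(P),π1(X)) ≤ (1+ε)²·cost(P,X), and likewise with X* in place of X; (ii) (1−ε)·cost(π1(P),Y) ≤ cost((S,Δ,w),Y) ≤ (1+ε)·cost(π1(P),Y) for every finite nonempty Y ⊂ ℝ^{d1} with |Y| ≤ k; (iii) (1/(1+ε)²)·cost((S,Δ,w),π1(X)) ≤ cost((π3(S),Δ,w),π3(π1(X)))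 ≤ (1+ε)²·cost((S,Δ,w),π1(X)), and likewise with X* in place of X; (iv) X' := π3(π1(X)) satisfies cost((π3(S),Δ,w),X') ≤ cost((π3(S),Δ,w),Y) for every finite nonempty Y ⊂ ℝ^{d2} with |Y| ≤ k. Then cost(P,X) ≤ ((1+ε)^9/(1−ε))·cost(P,X*). (Approximation-error part of Theorem 9 on the DR+CR+DR algorithm JL+FSS+JL, conditioned on the JL and coreset events.) -/
open scoped BigOperators

/-! The three reductions (JL into `ℝ^{d1}`, the coreset, JL into `ℝ^{d2}`) each distort the cost
of both `X` and `X*` by a bounded factor, so the optimality of `π3(π1(X))` for the last surrogate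
cost is pulled back one level at a time: a lower bound at `X` and an upper bound at `X*` per level
give the factors `(1+ε)²·1·(1+ε)²`, then `(1-ε)⁻¹·(1+ε)`, then `(1+ε)²·(1+ε)²`. -/

/-- Read `fx, fy` as the costs of two solutions `x, y` and `gx, gy` as their surrogate costs. -/
theorem le_mul_of_surrogate_le_mul {fx fy gx gy a b c : ℝ} (ha : 0 ≤ a) (hc : 0 ≤ c)
    (hfx : fx ≤ a * gx) (hg : gx ≤ c * gy) (hgy : gy ≤ b * fy) : fx ≤ a * c * b * fy :=
  calc fx ≤ a * gx := hfx
    _ ≤ a * (c * (b * fy)) := by gcongr; exact hg.trans (by gcongr)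
    _ = a * c * b * fy := by ring

theorem le_mul_of_one_div_mul_le {a b c : ℝ} (hc : 0 < c) (h : 1 / c * a ≤ b) : a ≤ c * b := by
  rwa [one_div_mul_eq_div, div_le_iff₀' hc] at h

theorem Finset.image_nonempty_and_card_le {α β : Type*} [DecidableEq β] {X : Finset α} {k : ℕ}
    (hk : 1 ≤ k) (hX : X.card = k) (f : α → β) : (X.image f).Nonempty ∧ (X.image f).card ≤ k :=
  ⟨(Finset.card_pos.mp (hX ▸ hk)).image f, Finset.card_image_le.trans hX.le⟩

theorem stmt5_general {d d1 d2 k : ℕ} (hk : 1 ≤ k) {ε : ℝ} (hε0 : 0 < ε) (hε1 : ε < 1)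
    (P : Finset (Pt d))
    (X Xstar : Finset (Pt d)) (hX : X.card = k) (hXstar : Xstar.card = k)
    (π1 : Pt d → Pt d1) (π3 : Pt d1 → Pt d2)
    (S : Finset (Pt d1)) (w : Pt d1 → ℝ) (Δ : ℝ)
    (hJL1X : (1 / (1 + ε) ^ 2) * kmeansCost P (X : Set (Pt d)) ≤
        projCost π1 P (π1 '' (X : Set (Pt d))) ∧
      projCost π1 P (π1 '' (X : Set (Pt d))) ≤
        (1 + ε) ^ 2 * kmeansCost P (X : Set (Pt d)))
    (hJL1Xstar : (1 / (1 + ε) ^ 2) * kmeansCost P (Xstar : Set (Pt d)) ≤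
        projCost π1 P (π1 '' (Xstar : Set (Pt d))) ∧
      projCost π1 P (π1 '' (Xstar : Set (Pt d))) ≤
        (1 + ε) ^ 2 * kmeansCost P (Xstar : Set (Pt d)))
    (hcore : ∀ Y : Finset (Pt d1), Y.Nonempty → Y.card ≤ k →
      (1 - ε) * projCost π1 P (Y : Set (Pt d1)) ≤ coresetCost S Δ w id (Y : Set (Pt d1)) ∧
      coresetCost S Δ w id (Y : Set (Pt d1)) ≤ (1 + ε) * projCost π1 P (Y : Set (Pt d1)))
    (hJL2X : (1 / (1 + ε) ^ 2) * coresetCost S Δ w id (π1 '' (X : Set (Pt d))) ≤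
        coresetCost S Δ w π3 (π3 '' (π1 '' (X : Set (Pt d)))) ∧
      coresetCost S Δ w π3 (π3 '' (π1 '' (X : Set (Pt d)))) ≤
        (1 + ε) ^ 2 * coresetCost S Δ w id (π1 '' (X : Set (Pt d))))
    (hJL2Xstar : (1 / (1 + ε) ^ 2) * coresetCost S Δ w id (π1 '' (Xstar : Set (Pt d))) ≤
        coresetCost S Δ w π3 (π3 '' (π1 '' (Xstar : Set (Pt d)))) ∧
      coresetCost S Δ w π3 (π3 '' (π1 '' (Xstar : Set (Pt d)))) ≤
        (1 + ε) ^ 2 * coresetCost S Δ w id (π1 '' (Xstar : Set (Pt d))))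
    (hopt : ∀ Y : Finset (Pt d2), Y.Nonempty → Y.card ≤ k →
      coresetCost S Δ w π3 (π3 '' (π1 '' (X : Set (Pt d)))) ≤
        coresetCost S Δ w π3 (Y : Set (Pt d2))) :
    kmeansCost P (X : Set (Pt d)) ≤
      ((1 + ε) ^ 9 / (1 - ε)) * kmeansCost P (Xstar : Set (Pt d)) := by
  classical
  have hε : 0 < 1 - ε := by linarith
  obtain ⟨hXne, hXk⟩ := Finset.image_nonempty_and_card_le hk hX π1
  obtain ⟨hXsne, hXsk⟩ := Finset.image_nonempty_and_card_le hk hXstar π1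
  have hcoreX := hcore _ hXne hXk
  have hcoreXs := hcore _ hXsne hXsk
  rw [Finset.coe_image] at hcoreX hcoreXs
  have hoptXs := hopt _ (hXsne.image π3) (Finset.card_image_le.trans hXsk)
  rw [Finset.coe_image, Finset.coe_image] at hoptXs
  have hcoreset := le_mul_of_surrogate_le_mul (by positivity) zero_le_one
    (le_mul_of_one_div_mul_le (by positivity) hJL2X.1) (hoptXs.trans (one_mul _).ge) hJL2Xstar.2
  have hproj := le_mul_of_surrogate_le_mul (by positivity) (by positivity)
    ((le_inv_mul_iff₀ hε).2 hcoreX.1) hcoreset hcoreXs.2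
  have hpts := le_mul_of_surrogate_le_mul (by positivity) (by positivity)
    (le_mul_of_one_div_mul_le (by positivity) hJL1X.1) hproj hJL1Xstar.2
  exact hpts.trans_eq (by field_simp)

theorem stmt5 {d d1 d2 k : ℕ} (hk : 1 ≤ k) {ε : ℝ} (hε0 : 0 < ε) (hε1 : ε < 1)
    (P : Finset (Pt d)) (hP : P.Nonempty)
    (X Xstar : Finset (Pt d)) (hX : X.card = k) (hXstar : Xstar.card = k)
    (π1 : Pt d → Pt d1) (π3 : Pt d1 → Pt d2)
    (S : Finset (Pt d1)) (hS : S.Nonempty) (w : Pt d1 → ℝ) (Δ : ℝ)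
    (hJL1X : (1 / (1 + ε) ^ 2) * kmeansCost P (X : Set (Pt d)) ≤
        projCost π1 P (π1 '' (X : Set (Pt d))) ∧
      projCost π1 P (π1 '' (X : Set (Pt d))) ≤
        (1 + ε) ^ 2 * kmeansCost P (X : Set (Pt d)))
    (hJL1Xstar : (1 / (1 + ε) ^ 2) * kmeansCost P (Xstar : Set (Pt d)) ≤
        projCost π1 P (π1 '' (Xstar : Set (Pt d))) ∧
      projCost π1 P (π1 '' (Xstar : Set (Pt d))) ≤
        (1 + ε) ^ 2 * kmeansCost P (Xstar : Set (Pt d)))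
    (hcore : ∀ Y : Finset (Pt d1), Y.Nonempty → Y.card ≤ k →
      (1 - ε) * projCost π1 P (Y : Set (Pt d1)) ≤ coresetCost S Δ w id (Y : Set (Pt d1)) ∧
      coresetCost S Δ w id (Y : Set (Pt d1)) ≤ (1 + ε) * projCost π1 P (Y : Set (Pt d1)))
    (hJL2X : (1 / (1 + ε) ^ 2) * coresetCost S Δ w id (π1 '' (X : Set (Pt d))) ≤
        coresetCost S Δ w π3 (π3 '' (π1 '' (X : Set (Pt d)))) ∧
      coresetCost S Δ w π3 (π3 '' (π1 '' (X : Set (Pt d)))) ≤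
        (1 + ε) ^ 2 * coresetCost S Δ w id (π1 '' (X : Set (Pt d))))
    (hJL2Xstar : (1 / (1 + ε) ^ 2) * coresetCost S Δ w id (π1 '' (Xstar : Set (Pt d))) ≤
        coresetCost S Δ w π3 (π3 '' (π1 '' (Xstar : Set (Pt d)))) ∧
      coresetCost S Δ w π3 (π3 '' (π1 '' (Xstar : Set (Pt d)))) ≤
        (1 + ε) ^ 2 * coresetCost S Δ w id (π1 '' (Xstar : Set (Pt d))))
    (hopt : ∀ Y : Finset (Pt d2), Y.Nonempty → Y.card ≤ k →
      coresetCost S Δ w π3 (π3 '' (π1 '' (X : Set (Pt d)))) ≤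
        coresetCost S Δ w π3 (Y : Set (Pt d2))) :
    kmeansCost P (X : Set (Pt d)) ≤
      ((1 + ε) ^ 9 / (1 - ε)) * kmeansCost P (Xstar : Set (Pt d)) :=
  stmt5_general hk hε0 hε1 P X Xstar hX hXstar π1 π3 S w Δ hJL1X hJL1Xstar hcore hJL2X hJL2Xstar
    hopt
end

section
/- Let ε ∈ (0,1), k ≥ 1, P ⊂ ℝ^d finite nonempty, τ : ℝ^d → ℝ^d a map, and Δ ≥ 0 such that (1−ε)·cost(P,X) ≤ cost(τ(P),X) + Δ ≤ (1+ε)·cost(P,X) for every X ⊂ ℝ^d with |X| = k. Suppose a triple (S,0,w), with S ⊂ ℝ^d finite nonempty and w : S → ℝ, satisfies (1−ε)·cost(τ(P),X) ≤ cost((S,0,w),X) ≤ (1+ε)·cost(τ(P),X) for every X ⊂ ℝ^d with |X| = k, and suppose X ⊂ ℝ^d with |X| = k satisfies cost((S,0,w),X) ≤ cost((S,0,w),Y) for every Y ⊂ ℝ^d with |Y| = k. Then for every X* ⊂ ℝ^d with |X*| = k, cost(P,X) ≤ ((1+ε)²/(1−ε)²)·cost(P,X*). (Approximation-error part of the Theorem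 on BKLW, conditioned on the disPCA and disSS guarantees.) -/
open scoped BigOperators

/- Optimality of `X` for the coreset cost makes it a `(1 + ε) / (1 - ε)`-approximate minimiser of the
projected cost; passing through the projection guarantee once more costs another such factor. -/

theorem le_mul_div_mul_of_approx {ε Δ c a a' b b' : ℝ} (hε : ε < 1) (hΔ : 0 ≤ Δ) (hc : 1 ≤ c)
    (ha : (1 - ε) * a ≤ a' + Δ) (hab : a' ≤ c * b') (hb : b' + Δ ≤ (1 + ε) * b) :
    a ≤ c * ((1 + ε) / (1 - ε)) * b := by
  have hε' : 0 < 1 - ε := sub_pos.mpr hε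
  rw [mul_div_assoc', div_mul_eq_mul_div, le_div_iff₀ hε', mul_comm a]
  calc (1 - ε) * a ≤ a' + Δ := ha
    _ ≤ c * b' + c * Δ := add_le_add hab (le_mul_of_one_le_left hΔ hc)
    _ = c * (b' + Δ) := by ring
    _ ≤ c * ((1 + ε) * b) := mul_le_mul_of_nonneg_left hb (by linarith)
    _ = c * (1 + ε) * b := by ring

theorem stmt6_general {d k : ℕ} {ε : ℝ} (hε0 : 0 < ε) (hε1 : ε < 1)
    (P : Finset (Pt d))
    (τ : Pt d → Pt d) (Δ : ℝ) (hΔ : 0 ≤ Δ)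
    (hpca : ∀ X : Finset (Pt d), X.card = k →
      (1 - ε) * kmeansCost P (X : Set (Pt d)) ≤ projCost τ P (X : Set (Pt d)) + Δ ∧
      projCost τ P (X : Set (Pt d)) + Δ ≤ (1 + ε) * kmeansCost P (X : Set (Pt d)))
    (S : Finset (Pt d)) (w : Pt d → ℝ)
    (hcore : ∀ X : Finset (Pt d), X.card = k →
      (1 - ε) * projCost τ P (X : Set (Pt d)) ≤ coresetCost S 0 w id (X : Set (Pt d)) ∧
      coresetCost S 0 w id (X : Set (Pt d)) ≤ (1 + ε) * projCost τ P (X : Set (Pt d)))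
    (X : Finset (Pt d)) (hX : X.card = k)
    (hopt : ∀ Y : Finset (Pt d), Y.card = k →
      coresetCost S 0 w id (X : Set (Pt d)) ≤ coresetCost S 0 w id (Y : Set (Pt d))) :
    ∀ Xstar : Finset (Pt d), Xstar.card = k →
      kmeansCost P (X : Set (Pt d)) ≤
        ((1 + ε) ^ 2 / (1 - ε) ^ 2) * kmeansCost P (Xstar : Set (Pt d)) := by
  intro Xstar hXstar
  have hratio : 1 ≤ (1 + ε) / (1 - ε) := (one_le_div (by linarith)).mpr (by linarith)
  have hproj : projCost τ P X ≤ 1 * ((1 + ε) / (1 - ε)) * projCost τ P Xstar :=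
    le_mul_div_mul_of_approx hε1 le_rfl le_rfl (by simpa using (hcore X hX).1)
      (by simpa using hopt Xstar hXstar) (by simpa using (hcore Xstar hXstar).2)
  calc kmeansCost P X
      ≤ (1 + ε) / (1 - ε) * ((1 + ε) / (1 - ε)) * kmeansCost P Xstar :=
        le_mul_div_mul_of_approx hε1 hΔ hratio (hpca X hX).1 (by simpa using hproj)
          (hpca Xstar hXstar).2
    _ = (1 + ε) ^ 2 / (1 - ε) ^ 2 * kmeansCost P Xstar := by rw [← sq, div_pow]

theorem stmt6 {d k : ℕ} (hk : 1 ≤ k) {ε : ℝ} (hε0 : 0 < ε) (hε1 : ε < 1)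
    (P : Finset (Pt d)) (hP : P.Nonempty)
    (τ : Pt d → Pt d) (Δ : ℝ) (hΔ : 0 ≤ Δ)
    (hpca : ∀ X : Finset (Pt d), X.card = k →
      (1 - ε) * kmeansCost P (X : Set (Pt d)) ≤ projCost τ P (X : Set (Pt d)) + Δ ∧
      projCost τ P (X : Set (Pt d)) + Δ ≤ (1 + ε) * kmeansCost P (X : Set (Pt d)))
    (S : Finset (Pt d)) (hS : S.Nonempty) (w : Pt d → ℝ)
    (hcore : ∀ X : Finset (Pt d), X.card = k →
      (1 - ε) * projCost τ P (X : Set (Pt d)) ≤ coresetCost S 0 w id (X : Set (Pt d)) ∧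
      coresetCost S 0 w id (X : Set (Pt d)) ≤ (1 + ε) * projCost τ P (X : Set (Pt d)))
    (X : Finset (Pt d)) (hX : X.card = k)
    (hopt : ∀ Y : Finset (Pt d), Y.card = k →
      coresetCost S 0 w id (X : Set (Pt d)) ≤ coresetCost S 0 w id (Y : Set (Pt d))) :
    ∀ Xstar : Finset (Pt d), Xstar.card = k →
      kmeansCost P (X : Set (Pt d)) ≤
        ((1 + ε) ^ 2 / (1 - ε) ^ 2) * kmeansCost P (Xstar : Set (Pt d)) :=
  stmt6_general hε0 hε1 P τ Δ hΔ hpca S w hcore X hX hopt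
end

section
/- Let ε ∈ (0,1), k ≥ 1, P ⊂ ℝ^d finite nonempty, π1 : ℝ^d → ℝ^{d'} a map, and X, X* ⊂ ℝ^d with |X| = |X*| = k. Suppose: (i) (1/(1+ε)²)·cost(P,X) ≤ cost(π1(P),π1(X)) ≤ (1+ε)²·cost(P,X), and likewise with X* in place of X; (ii) there are S' ⊂ ℝ^{d'} finite nonempty, w : S' → ℝ, and Δ ≥ 0 such that (1−ε)²·cost(π1(P),Y) ≤ cost((S',0,w),Y) + Δ ≤ (1+ε)²·cost(π1(P),Y) for every finite nonempty Y ⊂ ℝ^{d'} with |Y| ≤ k; (iii) X' := π1(X) satisfies cost((S',0,w),X') ≤ cost((S',0,w),Y) for every finite nonempty Y ⊂ ℝ^{d'} with |Y| ≤ k. Then cost(P,X) ≤ ((1+ε)^6/(1−ε)²)·cost(P,X*). (Approximation-error part of Theorem 11 on the distributed JL+BKLW algorithm, conditioned on the JL and BKLW events.) -/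
open scoped BigOperators

/-! The JL embedding `π1` changes the cost of `X` and of `X*` by at most a factor `(1 + ε)²`, and
the coreset cost is a `(1 ± ε)²`-sandwich of the projected cost, so its minimizer `π1(X)` is a
`(1 + ε)² / (1 - ε)²`-approximate minimizer of the projected cost. Chaining the three estimates
gives the factor `(1 + ε)⁶ / (1 - ε)²`. -/

theorem IsMinOn.le_div_mul_of_mul_le_of_le_mul {ι : Type*} {f g : ι → ℝ} {C : Set ι} {a b : ℝ}
    (ha : 0 < a) (hlower : ∀ y ∈ C, a * f y ≤ g y) (hupper : ∀ y ∈ C, g y ≤ b * f y)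
    {y₀ : ι} (hmin : IsMinOn g C y₀) (hy₀ : y₀ ∈ C) {y : ι} (hy : y ∈ C) :
    f y₀ ≤ b / a * f y := by
  rw [div_mul_eq_mul_div, le_div_iff₀ ha, mul_comm]
  exact (hlower y₀ hy₀).trans ((isMinOn_iff.mp hmin y hy).trans (hupper y hy))

theorem Finset.image_mem_of_card_eq {α β : Type*} [DecidableEq β] {k : ℕ} (hk : 1 ≤ k)
    (π : α → β) {X : Finset α} (hX : X.card = k) :
    X.image π ∈ {Y : Finset β | Y.Nonempty ∧ Y.card ≤ k} :=
  ⟨(Finset.card_pos.mp (by omega)).image π, hX ▸ Finset.card_image_le⟩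

theorem stmt8_general {d d' k : ℕ} (hk : 1 ≤ k) {ε : ℝ} (hε0 : 0 < ε) (hε1 : ε < 1)
    (P : Finset (Pt d))
    (π1 : Pt d → Pt d')
    (X Xstar : Finset (Pt d)) (hX : X.card = k) (hXstar : Xstar.card = k)
    (hJLX : (1 / (1 + ε) ^ 2) * kmeansCost P (X : Set (Pt d)) ≤
        projCost π1 P (π1 '' (X : Set (Pt d))) ∧
      projCost π1 P (π1 '' (X : Set (Pt d))) ≤
        (1 + ε) ^ 2 * kmeansCost P (X : Set (Pt d)))
    (hJLXstar : (1 / (1 + ε) ^ 2) * kmeansCost P (Xstar : Set (Pt d)) ≤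
        projCost π1 P (π1 '' (Xstar : Set (Pt d))) ∧
      projCost π1 P (π1 '' (Xstar : Set (Pt d))) ≤
        (1 + ε) ^ 2 * kmeansCost P (Xstar : Set (Pt d)))
    (S' : Finset (Pt d')) (w : Pt d' → ℝ) (Δ : ℝ)
    (hBKLW : ∀ Y : Finset (Pt d'), Y.Nonempty → Y.card ≤ k →
      (1 - ε) ^ 2 * projCost π1 P (Y : Set (Pt d')) ≤
          coresetCost S' 0 w id (Y : Set (Pt d')) + Δ ∧
      coresetCost S' 0 w id (Y : Set (Pt d')) + Δ ≤
          (1 + ε) ^ 2 * projCost π1 P (Y : Set (Pt d')))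
    (hopt : ∀ Y : Finset (Pt d'), Y.Nonempty → Y.card ≤ k →
      coresetCost S' 0 w id (π1 '' (X : Set (Pt d))) ≤
        coresetCost S' 0 w id (Y : Set (Pt d'))) :
    kmeansCost P (X : Set (Pt d)) ≤
      ((1 + ε) ^ 6 / (1 - ε) ^ 2) * kmeansCost P (Xstar : Set (Pt d)) := by
  classical
  have hXmem := Finset.image_mem_of_card_eq hk π1 hX
  have hXstarmem := Finset.image_mem_of_card_eq hk π1 hXstar
  have hmin : IsMinOn (fun Y : Finset (Pt d') => coresetCost S' 0 w id (Y : Set (Pt d')) + Δ)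
      {Y | Y.Nonempty ∧ Y.card ≤ k} (X.image π1) := isMinOn_iff.mpr fun Y hY => by
    simpa only [Finset.coe_image] using add_le_add_left (hopt Y hY.1 hY.2) Δ
  have hproj : projCost π1 P (π1 '' (X : Set (Pt d))) ≤
      (1 + ε) ^ 2 / (1 - ε) ^ 2 * projCost π1 P (π1 '' (Xstar : Set (Pt d))) := by
    simpa only [Finset.coe_image] using
      hmin.le_div_mul_of_mul_le_of_le_mul (pow_pos (sub_pos.mpr hε1) 2)
        (fun Y hY => (hBKLW Y hY.1 hY.2).1) (fun Y hY => (hBKLW Y hY.1 hY.2).2) hXmem hXstarmem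
  have hJL : kmeansCost P (X : Set (Pt d)) ≤
      (1 + ε) ^ 2 * projCost π1 P (π1 '' (X : Set (Pt d))) := by
    simpa only [one_div, inv_mul_le_iff₀ (by positivity : (0 : ℝ) < (1 + ε) ^ 2)] using hJLX.1
  calc kmeansCost P (X : Set (Pt d))
      ≤ (1 + ε) ^ 2 * ((1 + ε) ^ 2 / (1 - ε) ^ 2 * ((1 + ε) ^ 2 * kmeansCost P Xstar)) := by
        refine hJL.trans (mul_le_mul_of_nonneg_left (hproj.trans ?_) (by positivity))
        exact mul_le_mul_of_nonneg_left hJLXstar.2 (by positivity)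
    _ = ((1 + ε) ^ 6 / (1 - ε) ^ 2) * kmeansCost P (Xstar : Set (Pt d)) := by ring

theorem stmt8 {d d' k : ℕ} (hk : 1 ≤ k) {ε : ℝ} (hε0 : 0 < ε) (hε1 : ε < 1)
    (P : Finset (Pt d)) (hP : P.Nonempty)
    (π1 : Pt d → Pt d')
    (X Xstar : Finset (Pt d)) (hX : X.card = k) (hXstar : Xstar.card = k)
    (hJLX : (1 / (1 + ε) ^ 2) * kmeansCost P (X : Set (Pt d)) ≤
        projCost π1 P (π1 '' (X : Set (Pt d))) ∧
      projCost π1 P (π1 '' (X : Set (Pt d))) ≤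
        (1 + ε) ^ 2 * kmeansCost P (X : Set (Pt d)))
    (hJLXstar : (1 / (1 + ε) ^ 2) * kmeansCost P (Xstar : Set (Pt d)) ≤
        projCost π1 P (π1 '' (Xstar : Set (Pt d))) ∧
      projCost π1 P (π1 '' (Xstar : Set (Pt d))) ≤
        (1 + ε) ^ 2 * kmeansCost P (Xstar : Set (Pt d)))
    (S' : Finset (Pt d')) (hS' : S'.Nonempty) (w : Pt d' → ℝ) (Δ : ℝ) (hΔ : 0 ≤ Δ)
    (hBKLW : ∀ Y : Finset (Pt d'), Y.Nonempty → Y.card ≤ k →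
      (1 - ε) ^ 2 * projCost π1 P (Y : Set (Pt d')) ≤
          coresetCost S' 0 w id (Y : Set (Pt d')) + Δ ∧
      coresetCost S' 0 w id (Y : Set (Pt d')) + Δ ≤
          (1 + ε) ^ 2 * projCost π1 P (Y : Set (Pt d')))
    (hopt : ∀ Y : Finset (Pt d'), Y.Nonempty → Y.card ≤ k →
      coresetCost S' 0 w id (π1 '' (X : Set (Pt d))) ≤
        coresetCost S' 0 w id (Y : Set (Pt d'))) :
    kmeansCost P (X : Set (Pt d)) ≤
      ((1 + ε) ^ 6 / (1 - ε) ^ 2) * kmeansCost P (Xstar : Set (Pt d)) :=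
  stmt8_general hk hε0 hε1 P π1 X Xstar hX hXstar hJLX hJLXstar S' w Δ hBKLW hopt
end

section
/- Let S ⊂ ℝ^d be finite, w : S → [0,∞), Δ ∈ ℝ, and let X ⊂ ℝ^d be finite nonempty. Let Γ : S → ℝ^d and Δ_QT, Δ_D ≥ 0 be such that ‖q − Γ(q)‖ ≤ Δ_QT for every q ∈ S, and ‖q−x‖ ≤ Δ_D and ‖Γ(q)−x‖ ≤ Δ_D for every q ∈ S and every x ∈ X. Then |cost((S,Δ,w),X) − cost((Γ(S),Δ,w),X)| ≤ 2·Δ_D·Δ_QT·Σ_{q∈S} w(q), where cost((Γ(S),Δ,w),X) := Σ_{q∈S} w(q)·min_{x∈X} ‖Γ(q)−x‖² + Δ. (Quantized-coreset cost-difference bound, equation (30) in the proof of Theorem 13.) -/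
open scoped BigOperators

/-!
Each per-point cost is a minimum over `X`, and minima of pointwise `c`-close functions are
`c`-close. For a fixed centre `x`, `‖q - x‖² - ‖Γ q - x‖²` factors as a difference of norms,
at most `ΔQT` by the triangle inequality, times a sum of norms, at most `2 ΔD`. Summing with
the nonnegative weights gives the bound.
-/

theorem Finset.abs_inf'_sub_inf'_le {ι α : Type*} [AddCommGroup α] [LinearOrder α]
    [IsOrderedAddMonoid α] (s : Finset ι) (hs : s.Nonempty) (f g : ι → α) (c : α)
    (h : ∀ i ∈ s, |f i - g i| ≤ c) : |s.inf' hs f - s.inf' hs g| ≤ c := by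
  rw [abs_sub_le_iff, sub_le_iff_le_add, sub_le_iff_le_add]
  constructor
  · obtain ⟨i, hi, hgi⟩ := s.exists_mem_eq_inf' hs g
    rw [hgi]
    exact (s.inf'_le f hi).trans (sub_le_iff_le_add.mp ((le_abs_self _).trans (h i hi)))
  · obtain ⟨i, hi, hfi⟩ := s.exists_mem_eq_inf' hs f
    rw [hfi]
    exact (s.inf'_le g hi).trans
      (sub_le_iff_le_add.mp ((le_abs_self _).trans ((abs_sub_comm _ _).trans_le (h i hi))))

theorem abs_norm_sub_sq_sub_norm_sub_sq_le {F : Type*} [SeminormedAddCommGroup F] (p q y : F) :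
    |‖p - y‖ ^ 2 - ‖q - y‖ ^ 2| ≤ ‖p - q‖ * (‖p - y‖ + ‖q - y‖) := by
  have hdiff : |‖p - y‖ - ‖q - y‖| ≤ ‖p - q‖ := by
    simpa using abs_norm_sub_norm_le (p - y) (q - y)
  calc |‖p - y‖ ^ 2 - ‖q - y‖ ^ 2| = |‖p - y‖ - ‖q - y‖| * (‖p - y‖ + ‖q - y‖) := by
        rw [sq_sub_sq, abs_mul, abs_of_nonneg (by positivity : 0 ≤ ‖p - y‖ + ‖q - y‖)]; ring
    _ ≤ ‖p - q‖ * (‖p - y‖ + ‖q - y‖) := by gcongr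

theorem ptCost_eq_inf' {F : Type*} [NormedAddCommGroup F] (p : F) (Y : Finset F)
    (hY : Y.Nonempty) : ptCost p (Y : Set F) = Y.inf' hY (fun y => ‖p - y‖ ^ 2) := by
  rw [ptCost, Finset.inf'_eq_csInf_image]

theorem abs_ptCost_sub_ptCost_le {F : Type*} [NormedAddCommGroup F] (p q : F) (Y : Finset F)
    (hY : Y.Nonempty) (D : ℝ) (hD : ∀ y ∈ Y, ‖p - y‖ ≤ D ∧ ‖q - y‖ ≤ D) :
    |ptCost p (Y : Set F) - ptCost q (Y : Set F)| ≤ 2 * D * ‖p - q‖ := by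
  rw [ptCost_eq_inf' p Y hY, ptCost_eq_inf' q Y hY]
  refine Y.abs_inf'_sub_inf'_le hY _ _ _ fun y hy => ?_
  obtain ⟨hp, hq⟩ := hD y hy
  calc |‖p - y‖ ^ 2 - ‖q - y‖ ^ 2| ≤ ‖p - q‖ * (‖p - y‖ + ‖q - y‖) :=
        abs_norm_sub_sq_sub_norm_sub_sq_le p q y
    _ ≤ ‖p - q‖ * (2 * D) := by gcongr; linarith
    _ = 2 * D * ‖p - q‖ := by ring

theorem abs_coresetCost_sub_coresetCost_le {E F : Type*} [NormedAddCommGroup F]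
    (S : Finset E) (Δ : ℝ) (w : E → ℝ) (hw : ∀ q ∈ S, 0 ≤ w q) (π π' : E → F) (Y : Set F)
    (c : ℝ) (h : ∀ q ∈ S, |ptCost (π q) Y - ptCost (π' q) Y| ≤ c) :
    |coresetCost S Δ w π Y - coresetCost S Δ w π' Y| ≤ c * ∑ q ∈ S, w q := by
  simp only [coresetCost, add_sub_add_right_eq_sub, ← Finset.sum_sub_distrib, ← mul_sub,
    Finset.mul_sum]
  refine (Finset.abs_sum_le_sum_abs _ _).trans (Finset.sum_le_sum fun q hq => ?_)
  rw [abs_mul, abs_of_nonneg (hw q hq), mul_comm c]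
  exact mul_le_mul_of_nonneg_left (h q hq) (hw q hq)

theorem stmt10_general {d : ℕ} (S : Finset (Pt d)) (w : Pt d → ℝ) (hw : ∀ q ∈ S, 0 ≤ w q)
    (Δ : ℝ) (X : Finset (Pt d)) (hX : X.Nonempty)
    (Γ : Pt d → Pt d) (ΔQT ΔD : ℝ)
    (hΓ : ∀ q ∈ S, ‖q - Γ q‖ ≤ ΔQT)
    (hbound : ∀ q ∈ S, ∀ x ∈ X, ‖q - x‖ ≤ ΔD ∧ ‖Γ q - x‖ ≤ ΔD) :
    |coresetCost S Δ w id (X : Set (Pt d)) - coresetCost S Δ w Γ (X : Set (Pt d))| ≤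
      2 * ΔD * ΔQT * ∑ q ∈ S, w q := by
  refine abs_coresetCost_sub_coresetCost_le S Δ w hw id Γ _ _ fun q hq => ?_
  obtain ⟨x, hx⟩ := hX
  have hΔD : 0 ≤ ΔD := (norm_nonneg _).trans (hbound q hq x hx).1
  calc |ptCost q (X : Set (Pt d)) - ptCost (Γ q) (X : Set (Pt d))| ≤ 2 * ΔD * ‖q - Γ q‖ :=
        abs_ptCost_sub_ptCost_le q (Γ q) X ⟨x, hx⟩ ΔD (hbound q hq)
    _ ≤ 2 * ΔD * ΔQT := by gcongr; exact hΓ q hq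

theorem stmt10 {d : ℕ} (S : Finset (Pt d)) (w : Pt d → ℝ) (hw : ∀ q ∈ S, 0 ≤ w q)
    (Δ : ℝ) (X : Finset (Pt d)) (hX : X.Nonempty)
    (Γ : Pt d → Pt d) (ΔQT ΔD : ℝ) (hΔQT : 0 ≤ ΔQT) (hΔD : 0 ≤ ΔD)
    (hΓ : ∀ q ∈ S, ‖q - Γ q‖ ≤ ΔQT)
    (hbound : ∀ q ∈ S, ∀ x ∈ X, ‖q - x‖ ≤ ΔD ∧ ‖Γ q - x‖ ≤ ΔD) :
    |coresetCost S Δ w id (X : Set (Pt d)) - coresetCost S Δ w Γ (X : Set (Pt d))| ≤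
      2 * ΔD * ΔQT * ∑ q ∈ S, w q :=
  stmt10_general S w hw Δ X hX Γ ΔQT ΔD hΓ hbound
end

section
/- Let ε1, ε2 ∈ (0,1), k ≥ 1, Δ_D, Δ_QT ≥ 0, let P ⊂ ℝ^d be finite nonempty with |P| = n, let X, X* ⊂ ℝ^d with |X| = |X*| = k, and let π1 : ℝ^d → ℝ^{d'} be a map. Suppose: (i) (1/(1+ε1)²)·cost(P,X) ≤ cost(π1(P),π1(X)) ≤ (1+ε1)²·cost(P,X), and likewise with X* in place of X; (ii) a triple (S',Δ,w), with S' ⊂ ℝ^{d'} finite nonempty, w : S' → [0,∞) with Σ_{q∈S'} w(q) = n, and Δ ∈ ℝ, satisfies (1−ε2)·cost(π1(P),Y) ≤ cost((S',Δ,w),Y) ≤ (1+ε2)·cost(π1(P),Y) for every finite nonempty Y ⊂ ℝ^{d'} with |Y| ≤ k; (iii) Γ : S' → ℝ^{d'} satisfies ‖q − Γ(q)‖ ≤ Δ_QT for every q ∈ S', and ‖q−y‖ ≤ Δ_D and ‖Γ(q)−y‖ ≤ Δ_D for every q ∈ S' and every y ∈ π1(X) ∪ π1(X*); (iv) X' :=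 π1(X) satisfies cost((Γ(S'),Δ,w),X') ≤ cost((Γ(S'),Δ,w),Y) for every finite nonempty Y ⊂ ℝ^{d'} with |Y| ≤ k. Then cost(P,X) ≤ ((1+ε1)^4·(1+ε2)/(1−ε2))·cost(P,X*) + ((1+ε1)²/(1−ε2))·4·n·Δ_D·Δ_QT. (Theorem 13, part 1: the quantization-added DR+CR algorithm, conditioned on the JL and coreset events.) -/
open scoped BigOperators

/-!
Compare the three solutions in the projected space. The coreset guarantee transfers the cost of
`π1(X)` and of `π1(X*)` between `π1(P)` and the coreset; moving every coreset point by at most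
`ΔQT` changes each squared distance to a centre within distance `ΔD` by at most `2 ΔD ΔQT`, so
quantization costs at most `2 n ΔD ΔQT` (total weight `n`) on each side of the optimality of
`π1(X)` for the quantized coreset. The JL distortion then moves both costs back to `ℝ^d`.
-/

section PtCost

variable {F : Type*} [NormedAddCommGroup F]

lemma ptCost_le_of_mem (p : F) {Y : Set F} {y : F} (hy : y ∈ Y) :
    ptCost p Y ≤ ‖p - y‖ ^ 2 :=
  csInf_le ⟨0, by rintro b ⟨z, -, rfl⟩; positivity⟩ ⟨y, hy, rfl⟩

-- `a² - b² = (a - b)(a + b)` with `a - b ≤ ‖q - q'‖` by the triangle inequality.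
lemma sq_norm_sub_le_sq_norm_sub_add {q q' y : F} {D t : ℝ} (hqq' : ‖q - q'‖ ≤ t)
    (hq : ‖q - y‖ ≤ D) (hq' : ‖q' - y‖ ≤ D) :
    ‖q - y‖ ^ 2 ≤ ‖q' - y‖ ^ 2 + 2 * D * t := by
  have htri : ‖q - y‖ ≤ ‖q - q'‖ + ‖q' - y‖ := norm_sub_le_norm_sub_add_norm_sub q q' y
  have ht : 0 ≤ t := (norm_nonneg _).trans hqq'
  nlinarith [norm_nonneg (q - y), norm_nonneg (q' - y)]

lemma ptCost_le_ptCost_add {q q' : F} {Y : Set F} (hY : Y.Nonempty) {D t : ℝ}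
    (hqq' : ‖q - q'‖ ≤ t) (hD : ∀ y ∈ Y, ‖q - y‖ ≤ D ∧ ‖q' - y‖ ≤ D) :
    ptCost q Y ≤ ptCost q' Y + 2 * D * t := by
  suffices ptCost q Y - 2 * D * t ≤ ptCost q' Y by linarith
  refine le_csInf (hY.image _) ?_
  rintro b ⟨y, hy, rfl⟩
  have := sq_norm_sub_le_sq_norm_sub_add hqq' (hD y hy).1 (hD y hy).2
  linarith [ptCost_le_of_mem q hy]

end PtCost

lemma coresetCost_le_coresetCost_add {E F : Type*} [NormedAddCommGroup F] {S : Finset E}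
    {w : E → ℝ} (hw : ∀ q ∈ S, 0 ≤ w q) (Δ : ℝ) {π π' : E → F} {Y : Set F} {c : ℝ}
    (h : ∀ q ∈ S, ptCost (π q) Y ≤ ptCost (π' q) Y + c) :
    coresetCost S Δ w π Y ≤ coresetCost S Δ w π' Y + (∑ q ∈ S, w q) * c := by
  have hsum :
      ∑ q ∈ S, w q * ptCost (π q) Y ≤ ∑ q ∈ S, (w q * ptCost (π' q) Y + w q * c) :=
    Finset.sum_le_sum fun q hq => by
      rw [← mul_add]; exact mul_le_mul_of_nonneg_left (h q hq) (hw q hq)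
  rw [Finset.sum_add_distrib, ← Finset.sum_mul] at hsum
  unfold coresetCost
  linarith

lemma le_of_distortion_of_approx {ε1 ε2 A B a b E : ℝ} (hε1 : 0 < 1 + ε1) (hε2 : 0 ≤ 1 + ε2)
    (hε2' : ε2 < 1) (hA : 1 / (1 + ε1) ^ 2 * A ≤ a) (hb : b ≤ (1 + ε1) ^ 2 * B)
    (hab : (1 - ε2) * a ≤ (1 + ε2) * b + E) :
    A ≤ ((1 + ε1) ^ 4 * (1 + ε2) / (1 - ε2)) * B + ((1 + ε1) ^ 2 / (1 - ε2)) * E := by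
  have hc : 0 < (1 + ε1) ^ 2 := by positivity
  have hA' : A ≤ (1 + ε1) ^ 2 * a := by
    rwa [one_div_mul_eq_div, div_le_iff₀ hc, mul_comm] at hA
  have hε2'' : 0 < 1 - ε2 := by linarith
  rw [div_mul_eq_mul_div, div_mul_eq_mul_div, ← add_div, le_div_iff₀ hε2'']
  nlinarith [mul_le_mul_of_nonneg_left hA' hε2''.le, mul_le_mul_of_nonneg_left hab hc.le,
    mul_le_mul_of_nonneg_left hb (mul_nonneg hc.le hε2)]

theorem stmt11_general {d d' k n : ℕ} (hk : 1 ≤ k) {ε1 ε2 : ℝ}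
    (hε10 : 0 < ε1) (hε20 : 0 < ε2) (hε21 : ε2 < 1)
    (ΔD ΔQT : ℝ)
    (P : Finset (Pt d))
    (X Xstar : Finset (Pt d)) (hX : X.card = k) (hXstar : Xstar.card = k)
    (π1 : Pt d → Pt d')
    (hJLX : (1 / (1 + ε1) ^ 2) * kmeansCost P (X : Set (Pt d)) ≤
        projCost π1 P (π1 '' (X : Set (Pt d))) ∧
      projCost π1 P (π1 '' (X : Set (Pt d))) ≤
        (1 + ε1) ^ 2 * kmeansCost P (X : Set (Pt d)))
    (hJLXstar : (1 / (1 + ε1) ^ 2) * kmeansCost P (Xstar : Set (Pt d)) ≤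
        projCost π1 P (π1 '' (Xstar : Set (Pt d))) ∧
      projCost π1 P (π1 '' (Xstar : Set (Pt d))) ≤
        (1 + ε1) ^ 2 * kmeansCost P (Xstar : Set (Pt d)))
    (S' : Finset (Pt d')) (w : Pt d' → ℝ) (Δ : ℝ)
    (hw : ∀ q ∈ S', 0 ≤ w q) (hwsum : (∑ q ∈ S', w q) = (n : ℝ))
    (hcore : ∀ Y : Finset (Pt d'), Y.Nonempty → Y.card ≤ k →
      (1 - ε2) * projCost π1 P (Y : Set (Pt d')) ≤ coresetCost S' Δ w id (Y : Set (Pt d')) ∧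
      coresetCost S' Δ w id (Y : Set (Pt d')) ≤ (1 + ε2) * projCost π1 P (Y : Set (Pt d')))
    (Γ : Pt d' → Pt d')
    (hΓ : ∀ q ∈ S', ‖q - Γ q‖ ≤ ΔQT)
    (hdiam : ∀ q ∈ S', ∀ y ∈ (π1 '' (X : Set (Pt d)) ∪ π1 '' (Xstar : Set (Pt d))),
      ‖q - y‖ ≤ ΔD ∧ ‖Γ q - y‖ ≤ ΔD)
    (hopt : ∀ Y : Finset (Pt d'), Y.Nonempty → Y.card ≤ k →
      coresetCost S' Δ w Γ (π1 '' (X : Set (Pt d))) ≤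
        coresetCost S' Δ w Γ (Y : Set (Pt d'))) :
    kmeansCost P (X : Set (Pt d)) ≤
      ((1 + ε1) ^ 4 * (1 + ε2) / (1 - ε2)) * kmeansCost P (Xstar : Set (Pt d)) +
        ((1 + ε1) ^ 2 / (1 - ε2)) * (4 * (n : ℝ) * ΔD * ΔQT) := by
  classical
  have hXne : X.Nonempty := Finset.card_pos.1 (by omega)
  have hXsne : Xstar.Nonempty := Finset.card_pos.1 (by omega)
  have hcoreX := (hcore (X.image π1) (hXne.image _) (hX ▸ Finset.card_image_le)).1
  have hcoreXs := (hcore (Xstar.image π1) (hXsne.image _) (hXstar ▸ Finset.card_image_le)).2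
  have hoptXs := hopt (Xstar.image π1) (hXsne.image _) (hXstar ▸ Finset.card_image_le)
  rw [Finset.coe_image] at hcoreX hcoreXs hoptXs
  have hquantX := coresetCost_le_coresetCost_add hw Δ (π := id) (π' := Γ)
    fun q hq => ptCost_le_ptCost_add ((Finset.coe_nonempty.2 hXne).image π1) (hΓ q hq)
      fun y hy => hdiam q hq y (Or.inl hy)
  have hquantXs := coresetCost_le_coresetCost_add hw Δ (π := Γ) (π' := id)
    fun q hq => ptCost_le_ptCost_add ((Finset.coe_nonempty.2 hXsne).image π1)
      ((norm_sub_rev _ _).trans_le (hΓ q hq)) fun y hy => (hdiam q hq y (Or.inr hy)).symm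
  rw [hwsum] at hquantX hquantXs
  have hprojected : (1 - ε2) * projCost π1 P (π1 '' (X : Set (Pt d))) ≤
      (1 + ε2) * projCost π1 P (π1 '' (Xstar : Set (Pt d))) + 4 * (n : ℝ) * ΔD * ΔQT := by
    linarith
  exact le_of_distortion_of_approx (by linarith) (by linarith) hε21 hJLX.1 hJLXstar.2
    hprojected

theorem stmt11 {d d' k n : ℕ} (hk : 1 ≤ k) {ε1 ε2 : ℝ}
    (hε10 : 0 < ε1) (hε11 : ε1 < 1) (hε20 : 0 < ε2) (hε21 : ε2 < 1)
    (ΔD ΔQT : ℝ) (hΔD : 0 ≤ ΔD) (hΔQT : 0 ≤ ΔQT)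
    (P : Finset (Pt d)) (hP : P.Nonempty) (hn : P.card = n)
    (X Xstar : Finset (Pt d)) (hX : X.card = k) (hXstar : Xstar.card = k)
    (π1 : Pt d → Pt d')
    (hJLX : (1 / (1 + ε1) ^ 2) * kmeansCost P (X : Set (Pt d)) ≤
        projCost π1 P (π1 '' (X : Set (Pt d))) ∧
      projCost π1 P (π1 '' (X : Set (Pt d))) ≤
        (1 + ε1) ^ 2 * kmeansCost P (X : Set (Pt d)))
    (hJLXstar : (1 / (1 + ε1) ^ 2) * kmeansCost P (Xstar : Set (Pt d)) ≤
        projCost π1 P (π1 '' (Xstar : Set (Pt d))) ∧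
      projCost π1 P (π1 '' (Xstar : Set (Pt d))) ≤
        (1 + ε1) ^ 2 * kmeansCost P (Xstar : Set (Pt d)))
    (S' : Finset (Pt d')) (hS' : S'.Nonempty) (w : Pt d' → ℝ) (Δ : ℝ)
    (hw : ∀ q ∈ S', 0 ≤ w q) (hwsum : (∑ q ∈ S', w q) = (n : ℝ))
    (hcore : ∀ Y : Finset (Pt d'), Y.Nonempty → Y.card ≤ k →
      (1 - ε2) * projCost π1 P (Y : Set (Pt d')) ≤ coresetCost S' Δ w id (Y : Set (Pt d')) ∧
      coresetCost S' Δ w id (Y : Set (Pt d')) ≤ (1 + ε2) * projCost π1 P (Y : Set (Pt d')))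
    (Γ : Pt d' → Pt d')
    (hΓ : ∀ q ∈ S', ‖q - Γ q‖ ≤ ΔQT)
    (hdiam : ∀ q ∈ S', ∀ y ∈ (π1 '' (X : Set (Pt d)) ∪ π1 '' (Xstar : Set (Pt d))),
      ‖q - y‖ ≤ ΔD ∧ ‖Γ q - y‖ ≤ ΔD)
    (hopt : ∀ Y : Finset (Pt d'), Y.Nonempty → Y.card ≤ k →
      coresetCost S' Δ w Γ (π1 '' (X : Set (Pt d))) ≤
        coresetCost S' Δ w Γ (Y : Set (Pt d'))) :
    kmeansCost P (X : Set (Pt d)) ≤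
      ((1 + ε1) ^ 4 * (1 + ε2) / (1 - ε2)) * kmeansCost P (Xstar : Set (Pt d)) +
        ((1 + ε1) ^ 2 / (1 - ε2)) * (4 * (n : ℝ) * ΔD * ΔQT) :=
  stmt11_general hk hε10 hε20 hε21 ΔD ΔQT P X Xstar hX hXstar π1 hJLX hJLXstar S' w Δ hw hwsum hcore
    Γ hΓ hdiam hopt
end
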